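/- arXiv:2106.10428 — 13 statements merged into one kernel-verified Lean document; each statement's English description precedes it below -/
import Mathlib

section
/- Let R be a commutative ring with identity. R is an MTL-ring (i.e., (I → J) + (J → I) = R for all ideals I, J of R) if and only if for all ideals I, J, K of R one has (I ∩ J) → K = (I → K) + (J → K). -/
/-- For ideals `I J` of a commutative ring, the residuation `I → J` is the ideal quotient
`(J : I) = {x : R | x • I ⊆ J}`, i.e. `Submodule.colon J I`.  A commutative ring `R` is an
MTL-ring iff `(I → J) + (J → I) = R` for all ideals `I J`.  This is equivalent to
`(I ⊓ J) → K = (I → K) + (J → K)` for all ideals `I J K`. -/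
theorem mtl_iff_inf_colon (R : Type*) [CommRing R] :
    (∀ I J : Ideal R, Submodule.colon J I + Submodule.colon I J = ⊤) ↔
      (∀ I J K : Ideal R,
        Submodule.colon K (I ⊓ J) = Submodule.colon K I + Submodule.colon K J) := by
  constructor
  · intro h I J K
    apply le_antisymm
    · intro x hx
      have h1 : (1 : R) ∈ Submodule.colon J I + Submodule.colon I J := by
        rw [h I J]; trivial
      obtain ⟨a, ha, b, hb, hab⟩ := Submodule.mem_sup.mp h1
      have hxa : x * a ∈ Submodule.colon K I := by
        rw [Submodule.mem_colon]
        intro p hp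
        have hap : a * p ∈ I ⊓ J :=
          ⟨Ideal.mul_mem_left _ _ hp, by
            simpa [smul_eq_mul] using Submodule.mem_colon.mp ha p hp⟩
        have := Submodule.mem_colon.mp hx _ hap
        simpa [smul_eq_mul, mul_assoc] using this
      have hxb : x * b ∈ Submodule.colon K J := by
        rw [Submodule.mem_colon]
        intro p hp
        have hbp : b * p ∈ I ⊓ J :=
          ⟨by simpa [smul_eq_mul] using Submodule.mem_colon.mp hb p hp,
            Ideal.mul_mem_left _ _ hp⟩
        have := Submodule.mem_colon.mp hx _ hbp
        simpa [smul_eq_mul, mul_assoc] using this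
      have : x = x * a + x * b := by rw [← mul_add, hab, mul_one]
      rw [this]
      exact Submodule.add_mem_sup hxa hxb
    · apply sup_le
      · intro x hx
        rw [Submodule.mem_colon] at hx ⊢
        exact fun p hp => hx p hp.1
      · intro x hx
        rw [Submodule.mem_colon] at hx ⊢
        exact fun p hp => hx p hp.2
  · intro h I J
    have key : Submodule.colon (I ⊓ J) I = Submodule.colon J I := by
      apply le_antisymm
      · intro x hx
        rw [Submodule.mem_colon] at hx ⊢
        exact fun p hp => (hx p hp).2
      · intro x hx
        rw [Submodule.mem_colon] at hx ⊢
        exact fun p hp => ⟨Submodule.smul_mem _ _ hp, hx p hp⟩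
    have key' : Submodule.colon (I ⊓ J) J = Submodule.colon I J := by
      apply le_antisymm
      · intro x hx
        rw [Submodule.mem_colon] at hx ⊢
        exact fun p hp => (hx p hp).1
      · intro x hx
        rw [Submodule.mem_colon] at hx ⊢
        exact fun p hp => ⟨hx p hp, Submodule.smul_mem _ _ hp⟩
    have htop : Submodule.colon (I ⊓ J) (I ⊓ J) = ⊤ := by
      rw [eq_top_iff]
      intro x _
      rw [Submodule.mem_colon]
      exact fun p hp => Submodule.smul_mem _ _ hp
    have := h I J (I ⊓ J)
    rw [htop, key, key'] at this
    exact this.symm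
end

section
/- Let R be a commutative ring with identity. R is an MTL-ring (i.e., (I → J) + (J → I) = R for all ideals I, J of R) if and only if for all ideals I, J, K of R one has I → (J + K) = (I → J) + (I → K). -/
/-- A commutative ring `R` is an MTL-ring (`(I → J) + (J → I) = R` for all ideals, where
`I → J` is the ideal quotient `(J : I) = Submodule.colon J I`) iff
`I → (J + K) = (I → J) + (I → K)` for all ideals `I J K`. -/
theorem mtl_iff_colon_sup (R : Type*) [CommRing R] :
    (∀ I J : Ideal R, Submodule.colon J I + Submodule.colon I J = ⊤) ↔
      (∀ I J K : Ideal R,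
        Submodule.colon (J + K) I = Submodule.colon J I + Submodule.colon K I) := by
  constructor
  · intro h I J K
    apply le_antisymm
    · intro x hx
      have h1 : (1 : R) ∈ Submodule.colon J K + Submodule.colon K J := by
        rw [h K J]; trivial
      obtain ⟨a, ha, b, hb, hab⟩ := Submodule.mem_sup.mp h1
      have hx' := Submodule.mem_colon.mp hx
      have haxJ : a * x ∈ Submodule.colon J I := by
        rw [Submodule.mem_colon]
        intro p hp
        have hxp := hx' p hp
        rw [smul_eq_mul] at hxp ⊢
        obtain ⟨j, hj, k, hk, hjk⟩ := Submodule.mem_sup.mp hxp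
        have heq : a * x * p = a * j + a * k := by
          rw [mul_assoc, ← hjk]; ring
        rw [heq]
        exact J.add_mem (J.mul_mem_left a hj)
          (by simpa [smul_eq_mul] using Submodule.mem_colon.mp ha k hk)
      have hbxK : b * x ∈ Submodule.colon K I := by
        rw [Submodule.mem_colon]
        intro p hp
        have hxp := hx' p hp
        rw [smul_eq_mul] at hxp ⊢
        obtain ⟨j, hj, k, hk, hjk⟩ := Submodule.mem_sup.mp hxp
        have heq : b * x * p = b * j + b * k := by
          rw [mul_assoc, ← hjk]; ring
        rw [heq]
        exact K.add_mem (by simpa [smul_eq_mul] using Submodule.mem_colon.mp hb j hj)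
          (K.mul_mem_left b hk)
      have hxeq : x = a * x + b * x := by rw [← add_mul, hab, one_mul]
      exact Submodule.mem_sup.mpr ⟨a * x, haxJ, b * x, hbxK, hxeq.symm⟩
    · exact sup_le (Submodule.colon_mono le_sup_left le_rfl)
        (Submodule.colon_mono le_sup_right le_rfl)
  · intro h I J
    have h1 := h (I + J) J I
    have h2 : Submodule.colon (J + I) (I + J) = ⊤ := by
      rw [eq_top_iff]
      intro x _
      rw [Submodule.mem_colon]
      intro p hp
      exact Submodule.smul_mem _ x (by rwa [add_comm J I])
    rw [h2] at h1
    rw [eq_top_iff, h1]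
    exact sup_le
      (le_sup_of_le_left (Submodule.colon_mono le_rfl (SetLike.coe_subset_coe.mpr le_sup_left)))
      (le_sup_of_le_right (Submodule.colon_mono le_rfl (SetLike.coe_subset_coe.mpr le_sup_right)))
end

section
/- A commutative ring R with identity is an MTL-ring if and only if for every ideal I of R the quotient ring R/I satisfies the (MTL)* condition: for all ideals A, B of R/I, if A ∩ B = {0} then A• + B• = R/I. -/
/-- A commutative ring `R` is an MTL-ring (`(I → J) + (J → I) = R` for all ideals, where
`I → J = Submodule.colon J I`) iff every quotient `R/I` satisfies the (MTL)* condition: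
for all ideals `A B` of `R/I`, if `A ⊓ B = 0` then `A• + B• = R/I`, where
`A• = (0 : A)` is the annihilator of `A`. -/
theorem mtl_iff_quotients_mtlStar (R : Type*) [CommRing R] :
    (∀ I J : Ideal R, Submodule.colon J I + Submodule.colon I J = ⊤) ↔
      (∀ I : Ideal R, ∀ A B : Ideal (R ⧸ I), A ⊓ B = ⊥ →
        Submodule.colon (⊥ : Ideal (R ⧸ I)) A + Submodule.colon (⊥ : Ideal (R ⧸ I)) B = ⊤) := by
  constructor
  · intro h I A B hAB
    have h' := h (A.comap (Ideal.Quotient.mk I)) (B.comap (Ideal.Quotient.mk I))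
    rw [Ideal.eq_top_iff_one] at h' ⊢
    obtain ⟨x, hx, y, hy, hxy⟩ := Submodule.mem_sup.mp h'
    refine Submodule.mem_sup.mpr ⟨Ideal.Quotient.mk I x, ?_, Ideal.Quotient.mk I y, ?_,
      by rw [← map_add, hxy, map_one]⟩
    · rw [Submodule.mem_colon] at hx ⊢
      intro p hp
      obtain ⟨a, rfl⟩ := Ideal.Quotient.mk_surjective p
      have ha : a ∈ A.comap (Ideal.Quotient.mk I) := hp
      have h1 : (Ideal.Quotient.mk I) x • (Ideal.Quotient.mk I) a ∈ A := by
        exact A.smul_mem _ hp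
      have h2 : (Ideal.Quotient.mk I) x • (Ideal.Quotient.mk I) a ∈ B := hx a ha
      rw [← hAB]
      exact ⟨h1, h2⟩
    · rw [Submodule.mem_colon] at hy ⊢
      intro p hp
      obtain ⟨b, rfl⟩ := Ideal.Quotient.mk_surjective p
      have hb : b ∈ B.comap (Ideal.Quotient.mk I) := hp
      have h1 : (Ideal.Quotient.mk I) y • (Ideal.Quotient.mk I) b ∈ B := B.smul_mem _ hp
      have h2 : (Ideal.Quotient.mk I) y • (Ideal.Quotient.mk I) b ∈ A := hy b hb
      rw [← hAB]
      exact ⟨h2, h1⟩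
  · intro h I J
    set K := I ⊓ J with hK
    set π := Ideal.Quotient.mk K with hπ
    have hsurj : Function.Surjective π := Ideal.Quotient.mk_surjective
    have hbot : I.map π ⊓ J.map π = ⊥ := by
      rw [eq_bot_iff]
      rintro z ⟨hzI, hzJ⟩
      obtain ⟨x, hxI, rfl⟩ := (Ideal.mem_map_iff_of_surjective π hsurj).mp hzI
      obtain ⟨y, hyJ, hxy⟩ := (Ideal.mem_map_iff_of_surjective π hsurj).mp hzJ
      have hxyK : y - x ∈ K := Ideal.Quotient.eq.mp hxy
      have hxJ : x ∈ J := by simpa using J.sub_mem hyJ hxyK.2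
      have : x ∈ K := ⟨hxI, hxJ⟩
      exact (Submodule.mem_bot _).mpr (Ideal.Quotient.eq_zero_iff_mem.mpr this)
    have h' := h K (I.map π) (J.map π) hbot
    rw [Ideal.eq_top_iff_one] at h' ⊢
    obtain ⟨a, ha, b, hb, hab⟩ := Submodule.mem_sup.mp h'
    obtain ⟨x, rfl⟩ := hsurj a
    obtain ⟨y, rfl⟩ := hsurj b
    have hxcol : x ∈ Submodule.colon J I := by
      rw [Submodule.mem_colon]
      intro p hp
      have : π x • π p ∈ (⊥ : Ideal (R ⧸ K)) :=
        (Submodule.mem_colon.mp ha) (π p) (Ideal.mem_map_of_mem π hp)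
      have hxp : x * p ∈ K := by
        rw [Submodule.mem_bot] at this
        rw [← Ideal.Quotient.eq_zero_iff_mem]
        simpa [smul_eq_mul] using this
      exact hxp.2
    have hycol : y ∈ Submodule.colon I J := by
      rw [Submodule.mem_colon]
      intro p hp
      have : π y • π p ∈ (⊥ : Ideal (R ⧸ K)) :=
        (Submodule.mem_colon.mp hb) (π p) (Ideal.mem_map_of_mem π hp)
      have hyp : y * p ∈ K := by
        rw [Submodule.mem_bot] at this
        rw [← Ideal.Quotient.eq_zero_iff_mem]
        simpa [smul_eq_mul] using this
      exact hyp.1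
    have hk : x + y - 1 ∈ K := by
      rw [← Ideal.Quotient.eq_zero_iff_mem]
      have : π (x + y) = 1 := by rw [map_add]; exact hab
      rw [map_sub, map_one]; exact sub_eq_zero.mpr this
    have hkJ : x + y - 1 ∈ Submodule.colon J I := by
      rw [Submodule.mem_colon]
      intro p hp
      rw [smul_eq_mul]
      exact J.mul_mem_right p hk.2
    refine Submodule.mem_sup.mpr ⟨x - (x + y - 1), Submodule.sub_mem _ hxcol hkJ, y, hycol, by ring⟩
end

section
/- Let R be a commutative local ring with identity. Then R is an MTL-ring if and only if the ideals of R are totally ordered by set inclusion (i.e., for all ideals I, J of R, either I ⊆ J or J ⊆ I). -/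
lemma colon_eq_top_iff {R : Type*} [CommRing R] (I J : Ideal R) :
    Submodule.colon J I = ⊤ ↔ I ≤ J := by
  constructor
  · intro h x hx
    have : (1 : R) ∈ Submodule.colon J I := h ▸ Submodule.mem_top
    simpa using Submodule.mem_colon.mp this x hx
  · intro h
    rw [eq_top_iff]
    intro x _
    exact Submodule.mem_colon.mpr fun p hp => Submodule.smul_mem _ _ (h hp)

/-- A commutative local ring `R` with identity is an MTL-ring (`(I → J) + (J → I) = R`
for all ideals, where `I → J = Submodule.colon J I`) iff its ideals are totally ordered
by inclusion. -/
theorem local_mtl_iff_ideals_chain (R : Type*) [CommRing R] [IsLocalRing R] :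
    (∀ I J : Ideal R, Submodule.colon J I + Submodule.colon I J = ⊤) ↔
      (∀ I J : Ideal R, I ≤ J ∨ J ≤ I) := by
  constructor
  · intro h I J
    have := h I J
    by_contra hc
    push_neg at hc
    have h1 : Submodule.colon J I ≠ ⊤ := fun ht => hc.1 ((colon_eq_top_iff I J).mp ht)
    have h2 : Submodule.colon I J ≠ ⊤ := fun ht => hc.2 ((colon_eq_top_iff J I).mp ht)
    have := sup_le (IsLocalRing.le_maximalIdeal h1) (IsLocalRing.le_maximalIdeal h2)
    rw [← Submodule.add_eq_sup] at this
    rw [h I J] at this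
    exact (IsLocalRing.maximalIdeal.isMaximal R).ne_top (top_le_iff.mp this)
  · intro h I J
    rcases h I J with hle | hle
    · rw [(colon_eq_top_iff I J).mpr hle]; simp
    · rw [(colon_eq_top_iff J I).mpr hle]; simp
end

section
/- Let R be a commutative MTL-ring with identity. Then for all ideals I, J of R and all natural numbers a, b, one has I^a · J^b ⊆ I^(a+b) + J^(a+b). -/
/-- In a commutative MTL-ring `R`, for all ideals `I J` and naturals `a b`,
`I^a · J^b ⊆ I^(a+b) + J^(a+b)`. -/
theorem mtl_pow_mul_pow_le (R : Type*) [CommRing R]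
    (hMTL : ∀ I J : Ideal R, Submodule.colon J I + Submodule.colon I J = ⊤) :
    ∀ (I J : Ideal R) (a b : ℕ), I ^ a * J ^ b ≤ I ^ (a + b) + J ^ (a + b) := by
  intro I J a b
  set A := Submodule.colon J I with hA
  set B := Submodule.colon I J with hB
  have hAI : A * I ≤ J := Ideal.mul_le.mpr fun r hr i hi => Submodule.mem_colon.mp hr i hi
  have hBJ : B * J ≤ I := Ideal.mul_le.mpr fun r hr j hj => Submodule.mem_colon.mp hr j hj
  have htop : A ^ a + B ^ b = ⊤ := by
    have hAB : A ⊔ B = ⊤ := hMTL I J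
    have h1 : (⊤ : Ideal R) = (A ⊔ B) ^ (a + b) := by
      rw [hAB, Ideal.top_pow]
    have h2 : (A ⊔ B) ^ (a + b) ≤ A ^ a ⊔ B ^ b :=
      Ideal.sup_pow_add_le_pow_sup_pow
    rw [Submodule.add_eq_sup]
    exact top_le_iff.mp (h1 ▸ h2)
  calc I ^ a * J ^ b = (A ^ a + B ^ b) * (I ^ a * J ^ b) := by
        rw [htop, Ideal.top_mul]
    _ = A ^ a * I ^ a * J ^ b + B ^ b * J ^ b * I ^ a := by ring
    _ ≤ I ^ (a + b) + J ^ (a + b) := by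
        apply sup_le
        · calc A ^ a * I ^ a * J ^ b = (A * I) ^ a * J ^ b := by rw [mul_pow]
            _ ≤ J ^ a * J ^ b := mul_le_mul_left (Ideal.pow_right_mono hAI a) _
            _ = J ^ (a + b) := by rw [← pow_add]
            _ ≤ _ := le_sup_right
        · calc B ^ b * J ^ b * I ^ a = (B * J) ^ b * I ^ a := by rw [mul_pow]
            _ ≤ I ^ b * I ^ a := mul_le_mul_left (Ideal.pow_right_mono hBJ b) _
            _ = I ^ (a + b) := by rw [← pow_add, add_comm]
            _ ≤ _ := le_sup_left
end

section
/- Let R be a commutative MTL-ring with identity. Then for all ideals I, J of R and every natural number n ≥ 1, one has (I + J)^n = I^n + J^n. -/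
/-- For ideals, `(A + B) ^ (k + m) ≤ A ^ k + B ^ m`. -/
lemma ideal_add_pow_le_aux {R : Type*} [CommRing R] (A B : Ideal R) :
    ∀ (n k m : ℕ), k + m = n → (A + B) ^ n ≤ A ^ k + B ^ m := by
  intro n
  induction n with
  | zero =>
    intro k m h
    obtain ⟨hk, hm⟩ := Nat.add_eq_zero.mp h
    subst hk; subst hm
    simp [Ideal.one_eq_top]
  | succ n ih =>
    intro k m h
    rcases Nat.eq_zero_or_pos k with hk | hk
    · subst hk
      calc (A + B) ^ (n + 1) ≤ ⊤ := le_top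
        _ ≤ A ^ 0 + B ^ m := by simp [Ideal.one_eq_top]
    rcases Nat.eq_zero_or_pos m with hm | hm
    · subst hm
      calc (A + B) ^ (n + 1) ≤ ⊤ := le_top
        _ ≤ A ^ k + B ^ 0 := by simp [Ideal.one_eq_top]
    obtain ⟨k', rfl⟩ := Nat.exists_eq_add_of_lt hk
    obtain ⟨m', rfl⟩ := Nat.exists_eq_add_of_lt hm
    simp only [zero_add] at *
    have h1 : k' + (m' + 1) = n := by omega
    have h2 : (k' + 1) + m' = n := by omega
    have e : (A + B) ^ (n + 1) = (A + B) ^ n * A + (A + B) ^ n * B := by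
      rw [pow_succ, mul_add]
    rw [e, Submodule.add_eq_sup]
    apply sup_le
    · calc (A + B) ^ n * A ≤ (A ^ k' + B ^ (m' + 1)) * A :=
        Ideal.mul_mono_left (ih _ _ h1)
      _ = A ^ k' * A + B ^ (m' + 1) * A := add_mul _ _ _
      _ ≤ A ^ (k' + 1) + B ^ (m' + 1) := by
          rw [Submodule.add_eq_sup, Submodule.add_eq_sup]
          apply sup_le
          · rw [← pow_succ]; exact le_sup_left
          · exact le_trans Ideal.mul_le_left le_sup_right
    · calc (A + B) ^ n * B ≤ (A ^ (k' + 1) + B ^ m') * B :=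
        Ideal.mul_mono_left (ih _ _ h2)
      _ = A ^ (k' + 1) * B + B ^ m' * B := add_mul _ _ _
      _ ≤ A ^ (k' + 1) + B ^ (m' + 1) := by
          rw [Submodule.add_eq_sup, Submodule.add_eq_sup]
          apply sup_le
          · exact le_trans Ideal.mul_le_left le_sup_left
          · rw [← pow_succ]; exact le_sup_right

/-- Key lemma: in an MTL-ring, `I ^ k * J ^ m ≤ I ^ (k + m) + J ^ (k + m)`. -/
lemma mtl_mul_pow_le {R : Type*} [CommRing R]
    (hMTL : ∀ I J : Ideal R, Submodule.colon J I + Submodule.colon I J = ⊤)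
    (I J : Ideal R) (k m : ℕ) : I ^ k * J ^ m ≤ I ^ (k + m) + J ^ (k + m) := by
  have htop : (1 : R) ∈ Submodule.colon J I + Submodule.colon I J := by
    rw [hMTL I J]; trivial
  obtain ⟨a, ha, b, hb, hab⟩ := Submodule.mem_sup.mp htop
  set A : Ideal R := Ideal.span {a}
  set B : Ideal R := Ideal.span {b}
  have hAB : A + B = ⊤ := by
    rw [Ideal.eq_top_iff_one]
    exact Submodule.mem_sup.mpr ⟨a, Ideal.subset_span rfl, b, Ideal.subset_span rfl, hab⟩
  have hAI : A * I ≤ J := by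
    rw [Ideal.span_singleton_mul_le_iff]
    intro z hz
    exact Submodule.mem_colon.mp ha z hz
  have hBJ : B * J ≤ I := by
    rw [Ideal.span_singleton_mul_le_iff]
    intro z hz
    exact Submodule.mem_colon.mp hb z hz
  have hAk : A ^ k * (I ^ k * J ^ m) ≤ J ^ (k + m) := by
    calc A ^ k * (I ^ k * J ^ m) = (A * I) ^ k * J ^ m := by
          rw [mul_pow]; ring
      _ ≤ J ^ k * J ^ m := Ideal.mul_mono_left (Ideal.pow_right_mono hAI k)
      _ = J ^ (k + m) := (pow_add J k m).symm
  have hBm : B ^ m * (I ^ k * J ^ m) ≤ I ^ (k + m) := by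
    calc B ^ m * (I ^ k * J ^ m) = (B * J) ^ m * I ^ k := by
          rw [mul_pow]; ring
      _ ≤ I ^ m * I ^ k := Ideal.mul_mono_left (Ideal.pow_right_mono hBJ m)
      _ = I ^ (k + m) := by rw [← pow_add, Nat.add_comm]
  calc I ^ k * J ^ m = ⊤ * (I ^ k * J ^ m) := (Ideal.top_mul _).symm
    _ = (A + B) ^ (k + m) * (I ^ k * J ^ m) := by
        rw [hAB, Ideal.top_pow]
    _ ≤ (A ^ k + B ^ m) * (I ^ k * J ^ m) :=
        Ideal.mul_mono_left (ideal_add_pow_le_aux A B (k + m) k m rfl)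
    _ = A ^ k * (I ^ k * J ^ m) + B ^ m * (I ^ k * J ^ m) := add_mul _ _ _
    _ ≤ I ^ (k + m) + J ^ (k + m) := by
        rw [Submodule.add_eq_sup, Submodule.add_eq_sup]
        exact sup_le (le_trans hAk le_sup_right) (le_trans hBm le_sup_left)

/-- In a commutative MTL-ring `R`, for all ideals `I J` and every natural `n ≥ 1`,
`(I + J)^n = I^n + J^n`. -/
theorem mtl_add_pow (R : Type*) [CommRing R]
    (hMTL : ∀ I J : Ideal R, Submodule.colon J I + Submodule.colon I J = ⊤) :
    ∀ (I J : Ideal R) (n : ℕ), 1 ≤ n → (I + J) ^ n = I ^ n + J ^ n := by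
  intro I J n hn
  refine le_antisymm ?_ ?_
  · -- (I + J) ^ n ≤ I ^ n + J ^ n by induction on n
    clear hn
    induction n with
    | zero => simp [Ideal.one_eq_top]
    | succ n ih =>
      rcases Nat.eq_zero_or_pos n with rfl | hn
      · simp
      have e : (I + J) ^ (n + 1) = (I + J) ^ n * I + (I + J) ^ n * J := by
        rw [pow_succ, mul_add]
      rw [e, Submodule.add_eq_sup]
      apply sup_le
      · calc (I + J) ^ n * I ≤ (I ^ n + J ^ n) * I := Ideal.mul_mono_left ih
          _ = I ^ n * I + J ^ n * I := add_mul _ _ _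
          _ ≤ I ^ (n + 1) + J ^ (n + 1) := by
              rw [Submodule.add_eq_sup (M := R)]
              apply sup_le
              · rw [← pow_succ]
                exact le_trans le_sup_left (le_of_eq (Submodule.add_eq_sup _ _).symm)
              · have := mtl_mul_pow_le hMTL J I n 1
                simp only [pow_one] at this
                calc J ^ n * I ≤ J ^ (n + 1) + I ^ (n + 1) := this
                  _ = I ^ (n + 1) + J ^ (n + 1) := add_comm _ _
      · calc (I + J) ^ n * J ≤ (I ^ n + J ^ n) * J := Ideal.mul_mono_left ih
          _ = I ^ n * J + J ^ n * J := add_mul _ _ _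
          _ ≤ I ^ (n + 1) + J ^ (n + 1) := by
              rw [Submodule.add_eq_sup (M := R)]
              apply sup_le
              · have := mtl_mul_pow_le hMTL I J n 1
                simpa only [pow_one] using this
              · rw [← pow_succ]
                exact le_trans le_sup_right (le_of_eq (Submodule.add_eq_sup _ _).symm)
  · rw [Submodule.add_eq_sup]
    exact sup_le (Ideal.pow_right_mono (by rw [Submodule.add_eq_sup]; exact le_sup_left) n)
      (Ideal.pow_right_mono (by rw [Submodule.add_eq_sup]; exact le_sup_right) n)
end

section
/- Let R be a commutative MTL-ring with identity. Then for all ideals I, J of R, one has (I + J)·(I ∩ J) = I·J. -/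
/-- In a commutative MTL-ring `R`, for all ideals `I J`, `(I + J)·(I ⊓ J) = I·J`. -/
theorem mtl_sup_mul_inf (R : Type*) [CommRing R]
    (hMTL : ∀ I J : Ideal R, Submodule.colon J I + Submodule.colon I J = ⊤) :
    ∀ I J : Ideal R, (I + J) * (I ⊓ J) = I * J := by
  intro I J
  apply le_antisymm
  · refine Ideal.mul_le.2 ?_
    intro r hr s hs
    rcases Submodule.mem_sup.1 hr with ⟨i, hi, j, hj, rfl⟩
    rw [add_mul]
    exact add_mem (Ideal.mul_mem_mul hi hs.2)
      (by rw [show j * s = s * j from mul_comm j s]; exact Ideal.mul_mem_mul hs.1 hj)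
  · refine Ideal.mul_le.2 ?_
    intro i hi j hj
    have h1 : (1 : R) ∈ Submodule.colon J I + Submodule.colon I J := by
      rw [hMTL]; trivial
    rcases Submodule.mem_sup.1 h1 with ⟨a, ha, b, hb, hab⟩
    have h2 : a * i ∈ I ⊓ J :=
      ⟨I.mul_mem_left a hi, Submodule.mem_colon.1 ha i hi⟩
    have h3 : b * j ∈ I ⊓ J :=
      ⟨Submodule.mem_colon.1 hb j hj, J.mul_mem_left b hj⟩
    have key : i * j = j * (a * i) + i * (b * j) := by
      linear_combination i * j * hab.symm
    rw [key]
    exact add_mem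
      (Ideal.mul_mem_mul (Submodule.mem_sup_right hj) h2)
      (Ideal.mul_mem_mul (Submodule.mem_sup_left hi) h3)
end

section
/- Let R be a commutative MTL-ring with identity. Then for all ideals I, J, K of R, one has K·(I ∩ J) = (K·I) ∩ (K·J). -/
lemma mtl_aux {R : Type*} [CommRing R] {I J K : Ideal R} {a : R}
    (ha : a ∈ Submodule.colon J I) {x : R} (hx : x ∈ K * I) :
    a * x ∈ K * (I ⊓ J) := by
  refine Submodule.mul_induction_on hx (fun k hk i hi => ?_) (fun y z hy hz => ?_)
  · have : a * (k * i) = k * (a * i) := by ring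
    rw [this]
    exact Ideal.mul_mem_mul hk ⟨I.mul_mem_left a hi,
      by simpa [smul_eq_mul] using Submodule.mem_colon.mp ha i hi⟩
  · have : a * (y + z) = a * y + a * z := by ring
    rw [this]; exact Ideal.add_mem _ hy hz

/-- In a commutative MTL-ring `R`, for all ideals `I J K`, `K·(I ⊓ J) = (K·I) ⊓ (K·J)`. -/
theorem mtl_mul_inf (R : Type*) [CommRing R]
    (hMTL : ∀ I J : Ideal R, Submodule.colon J I + Submodule.colon I J = ⊤) :
    ∀ I J K : Ideal R, K * (I ⊓ J) = (K * I) ⊓ (K * J) := by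
  intro I J K
  apply le_antisymm
  · exact le_inf (Ideal.mul_mono_right inf_le_left) (Ideal.mul_mono_right inf_le_right)
  · intro x hx
    have h1 : (1 : R) ∈ Submodule.colon J I + Submodule.colon I J := by
      rw [hMTL I J]; trivial
    obtain ⟨a, ha, b, hb, hab⟩ := Submodule.mem_sup.mp h1
    have : x = a * x + b * x := by rw [← add_mul, hab, one_mul]
    rw [this]
    refine Ideal.add_mem _ (mtl_aux ha hx.1) ?_
    have := mtl_aux hb hx.2
    rwa [inf_comm] at this
end

section
/- Every commutative MTL-ring R with identity is an arithmetical ring: its lattice of ideals is distributive, i.e., for all ideals I, J, K of R, K ∩ (I + J) = (K ∩ I) + (K ∩ J) (equivalently, K + (I ∩ J) = (K + I) ∩ (K + J)). -/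
/-- Every commutative MTL-ring `R` is an arithmetical ring: its lattice of ideals is
distributive, i.e. `K ⊓ (I + J) = (K ⊓ I) + (K ⊓ J)` for all ideals `I J K`. -/
theorem mtl_is_arithmetical (R : Type*) [CommRing R]
    (hMTL : ∀ I J : Ideal R, Submodule.colon J I + Submodule.colon I J = ⊤) :
    ∀ I J K : Ideal R, K ⊓ (I + J) = (K ⊓ I) + (K ⊓ J) := by
  intro I J K
  apply le_antisymm
  · rintro x ⟨hK, hIJ⟩
    obtain ⟨a, ha, b, hb, rfl⟩ := Submodule.mem_sup.mp hIJ
    have h1 : (1 : R) ∈ Submodule.colon J I + Submodule.colon I J := by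
      rw [hMTL I J]; trivial
    obtain ⟨u, hu, v, hv, huv⟩ := Submodule.mem_sup.mp h1
    rw [Submodule.mem_colon] at hu hv
    have hx : a + b = v * (a + b) + u * (a + b) := by
      rw [← add_mul, add_comm v u, huv, one_mul]
    rw [hx]
    apply Submodule.add_mem_sup
    · exact ⟨K.mul_mem_left v hK, by
        rw [mul_add]
        exact I.add_mem (I.mul_mem_left v ha) (by simpa using hv b hb)⟩
    · exact ⟨K.mul_mem_left u hK, by
        rw [mul_add]
        exact J.add_mem (by simpa using hu a ha) (J.mul_mem_left u hb)⟩
  · exact sup_le (inf_le_inf_left K le_sup_left) (inf_le_inf_left K le_sup_right)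
end

section
/- Let R be a commutative MTL-ring with identity. Then for all ideals I, J of R, the radical of I + J equals the sum of the radicals: √(I + J) = √I + √J. -/
/-- In a commutative MTL-ring `R`, for all ideals `I J`, `√(I + J) = √I + √J`. -/
theorem mtl_radical_add (R : Type*) [CommRing R]
    (hMTL : ∀ I J : Ideal R, Submodule.colon J I + Submodule.colon I J = ⊤) :
    ∀ I J : Ideal R, (I + J).radical = I.radical + J.radical := by
  intro I J
  apply le_antisymm
  · intro x hx
    obtain ⟨n, hn⟩ := hx
    have hn' : x ^ (n + 1) ∈ I + J := by
      rw [pow_succ]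
      exact Ideal.mul_mem_right x _ hn
    rw [Submodule.add_eq_sup, Submodule.mem_sup] at hn'
    obtain ⟨i, hi, j, hj, hij⟩ := hn'
    have h1 : (1 : R) ∈ Submodule.colon (Ideal.span {j}) (Ideal.span {i}) +
        Submodule.colon (Ideal.span {i}) (Ideal.span {j}) := by
      rw [hMTL]; trivial
    rw [Submodule.add_eq_sup, Submodule.mem_sup] at h1
    obtain ⟨a, ha, b, hb, hab⟩ := h1
    have hai : a * i ∈ J := by
      have := Submodule.mem_colon.mp ha i (Ideal.subset_span rfl)
      have h2 : Ideal.span {j} ≤ J := Ideal.span_le.mpr (by simpa using hj)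
      exact h2 this
    have hbj : b * j ∈ I := by
      have := Submodule.mem_colon.mp hb j (Ideal.subset_span rfl)
      have h2 : Ideal.span {i} ≤ I := Ideal.span_le.mpr (by simpa using hi)
      exact h2 this
    have hxa : x * a ∈ J.radical := by
      refine ⟨n + 1, ?_⟩
      have : (x * a) ^ (n + 1) = a ^ n * (a * i) + a ^ (n + 1) * j := by
        rw [mul_pow, ← hij]; ring
      rw [this]
      exact Ideal.add_mem _ (Ideal.mul_mem_left _ _ hai) (Ideal.mul_mem_left _ _ hj)
    have hxb : x * b ∈ I.radical := by
      refine ⟨n + 1, ?_⟩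
      have : (x * b) ^ (n + 1) = b ^ (n + 1) * i + b ^ n * (b * j) := by
        rw [mul_pow, ← hij]; ring
      rw [this]
      exact Ideal.add_mem _ (Ideal.mul_mem_left _ _ hi) (Ideal.mul_mem_left _ _ hbj)
    rw [Submodule.add_eq_sup, Submodule.mem_sup]
    exact ⟨x * b, hxb, x * a, hxa, by rw [← mul_add, add_comm b a, hab, mul_one]⟩
  · rw [Submodule.add_eq_sup, Submodule.add_eq_sup]
    exact sup_le (Ideal.radical_mono le_sup_left) (Ideal.radical_mono le_sup_right)
end

section
/- Let R be a Noetherian commutative ring with identity. Then R is an MTL-ring if and only if for every maximal ideal M of R, the ideals of the localization R_M of R at M are totally ordered by set inclusion. -/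
open Ideal

private lemma key_fwd {R : Type*} [CommRing R]
    (h : ∀ I J : Ideal R, Submodule.colon J I + Submodule.colon I J = ⊤)
    (M : Ideal R) [M.IsMaximal] (r t : R) :
    algebraMap R (Localization.AtPrime M) r ∈
      Ideal.span {algebraMap R (Localization.AtPrime M) t} ∨
    algebraMap R (Localization.AtPrime M) t ∈
      Ideal.span {algebraMap R (Localization.AtPrime M) r} := by
  have h1 : (1 : R) ∈ Submodule.colon (span {t}) (span {r}) +
      Submodule.colon (span {r}) (span {t}) := by
    rw [h]; trivial
  obtain ⟨x, hx, y, hy, hxy⟩ := Submodule.mem_sup.mp h1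
  have key : ∀ a b z : R, z ∉ M → z * a ∈ span {b} →
      algebraMap R (Localization.AtPrime M) a ∈
        Ideal.span {algebraMap R (Localization.AtPrime M) b} := by
    intro a b z hzM hzab
    set f := algebraMap R (Localization.AtPrime M) with hf
    obtain ⟨c, hc⟩ := Ideal.mem_span_singleton'.mp hzab
    have hu : IsUnit (f z) := IsLocalization.map_units _ (⟨z, hzM⟩ : M.primeCompl)
    obtain ⟨u, hu⟩ := hu
    refine Ideal.mem_span_singleton'.mpr ⟨↑u⁻¹ * f c, ?_⟩
    have hcb : f c * f b = f z * f a := by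
      rw [← _root_.map_mul, ← _root_.map_mul, hc]
    calc ↑u⁻¹ * f c * f b = ↑u⁻¹ * (f z * f a) := by rw [mul_assoc, hcb]
      _ = (↑u⁻¹ * ↑u) * f a := by rw [← hu, ← mul_assoc]
      _ = f a := by rw [u.inv_mul, one_mul]
  by_cases hxM : x ∈ M
  · right
    have hyM : y ∉ M := fun hyM =>
      Ideal.IsMaximal.ne_top ‹M.IsMaximal›
        ((Ideal.eq_top_iff_one M).mpr (hxy ▸ M.add_mem hxM hyM))
    exact key t r y hyM (Submodule.mem_colon.mp hy t (Ideal.mem_span_singleton_self t))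
  · left
    exact key r t x hxM (Submodule.mem_colon.mp hx r (Ideal.mem_span_singleton_self r))

private lemma key_bwd {R : Type*} [CommRing R] [IsNoetherianRing R]
    (M : Ideal R) [M.IsMaximal] (I J : Ideal R)
    (h : Ideal.map (algebraMap R (Localization.AtPrime M)) I ≤
         Ideal.map (algebraMap R (Localization.AtPrime M)) J) :
    ¬ Submodule.colon J I ≤ M := by
  obtain ⟨s, hs⟩ := (IsNoetherian.noetherian I)
  have step : ∀ a ∈ (s : Set R), ∃ t : R, t ∉ M ∧ t * a ∈ J := by
    intro a ha
    have hfa : algebraMap R (Localization.AtPrime M) a ∈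
        Ideal.map (algebraMap R (Localization.AtPrime M)) J := by
      apply h
      apply Ideal.mem_map_of_mem
      rw [← hs]
      exact Ideal.subset_span ha
    obtain ⟨⟨⟨j, hj⟩, ⟨m, hm⟩⟩, hx⟩ :=
      (IsLocalization.mem_map_algebraMap_iff M.primeCompl _).mp hfa
    rw [← _root_.map_mul] at hx
    obtain ⟨⟨c, hc⟩, hc'⟩ := (IsLocalization.eq_iff_exists M.primeCompl _).mp hx
    simp only at hc'
    refine ⟨c * m, fun hcm => (M.primeCompl).mul_mem hc hm hcm, ?_⟩
    have hca : c * m * a = c * j := by linear_combination hc'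
    rw [hca]
    exact J.mul_mem_left c hj
  choose tt htM htJ using step
  set T : R := ∏ a ∈ s.attach, tt a (a.2) with hT
  have hTM : T ∉ M := by
    have : T ∈ M.primeCompl := Submonoid.prod_mem _ (fun a _ => htM a a.2)
    exact this
  intro hle
  apply hTM
  apply hle
  rw [Submodule.mem_colon]
  intro p hp
  rw [← hs] at hp
  induction hp using Submodule.span_induction with
  | mem a ha =>
      obtain ⟨k, hk⟩ : tt a ha ∣ T :=
        Finset.dvd_prod_of_mem (fun b : {x // x ∈ s} => tt b b.2) (Finset.mem_attach s ⟨a, ha⟩)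
      rw [smul_eq_mul, hk, mul_comm (tt a ha) k, mul_assoc]
      exact J.mul_mem_left k (htJ a ha)
  | zero => simp
  | add a b _ _ ha hb => rw [smul_add]; exact J.add_mem ha hb
  | smul c a _ ha => rw [smul_comm]; exact J.smul_mem c ha

/-- A Noetherian commutative ring `R` is an MTL-ring iff for every maximal ideal `M`,
the ideals of the localization `R_M` at `M` are totally ordered by inclusion. -/
theorem noetherian_mtl_iff_localizations_chain (R : Type*) [CommRing R] [IsNoetherianRing R] :
    (∀ I J : Ideal R, Submodule.colon J I + Submodule.colon I J = ⊤) ↔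
      (∀ (M : Ideal R) [M.IsMaximal],
        ∀ I J : Ideal (Localization.AtPrime M), I ≤ J ∨ J ≤ I) := by
  constructor
  · intro h M _ I J
    by_cases hIJ : I ≤ J
    · exact Or.inl hIJ
    · right
      obtain ⟨a, haI, haJ⟩ := SetLike.not_le_iff_exists.mp hIJ
      intro b hbJ
      obtain ⟨⟨ra, sa⟩, hra : IsLocalization.mk' (Localization.AtPrime M) ra sa = a⟩ :=
        IsLocalization.mk'_surjective M.primeCompl a
      obtain ⟨⟨rb, sb⟩, hrb : IsLocalization.mk' (Localization.AtPrime M) rb sb = b⟩ :=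
        IsLocalization.mk'_surjective M.primeCompl b
      set f := algebraMap R (Localization.AtPrime M) with hf
      have hspa : span {a} = span {f ra} := by
        rw [← hra, IsLocalization.mk'_eq_mul_mk'_one]
        exact span_singleton_mul_right_unit (IsUnit.of_mul_eq_one _
          (by rw [IsLocalization.mk'_spec, map_one])) _
      have hspb : span {b} = span {f rb} := by
        rw [← hrb, IsLocalization.mk'_eq_mul_mk'_one]
        exact span_singleton_mul_right_unit (IsUnit.of_mul_eq_one _
          (by rw [IsLocalization.mk'_spec, map_one])) _
      rcases key_fwd h M ra rb with hc | hc
      · exfalso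
        apply haJ
        have hab : span {a} ≤ span {b} := by
          rw [hspa, hspb]
          exact (Ideal.span_singleton_le_iff_mem _).mpr hc
        exact (Ideal.span_singleton_le_iff_mem J).mp
          (le_trans hab ((Ideal.span_singleton_le_iff_mem J).mpr hbJ))
      · have hba : span {b} ≤ span {a} := by
          rw [hspa, hspb]
          exact (Ideal.span_singleton_le_iff_mem _).mpr hc
        exact (Ideal.span_singleton_le_iff_mem I).mp
          (le_trans hba ((Ideal.span_singleton_le_iff_mem I).mpr haI))
  · intro h I J
    by_contra hne
    obtain ⟨M, hM, hle⟩ := Ideal.exists_le_maximal _ hne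
    haveI := hM
    rcases h M (Ideal.map (algebraMap R (Localization.AtPrime M)) I)
        (Ideal.map (algebraMap R (Localization.AtPrime M)) J) with hc | hc
    · exact key_bwd M I J hc (le_trans le_sup_left hle)
    · exact key_bwd M J I hc (le_trans le_sup_right hle)
end

section
/- Let R be a Noetherian commutative ring with identity. Then R is an MTL-ring if and only if R is a BL-ring; that is, the prelinearity condition (I → J) + (J → I) = R for all ideals I, J holds if and only if both prelinearity and the divisibility condition I ∩ J = I·(I → J) for all ideals I, J hold. -/
open Ideal Submodule

/-- From prelinearity: at a maximal ideal `m`, any two ideals are comparable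
"up to a unit outside m". -/
lemma mtl_compare {R : Type*} [CommRing R]
    (H : ∀ I J : Ideal R, Submodule.colon J I + Submodule.colon I J = ⊤)
    {m : Ideal R} (hm : m.IsMaximal) (P Q : Ideal R) :
    ∃ v ∉ m, (∀ p ∈ P, v * p ∈ Q) ∨ (∀ q ∈ Q, v * q ∈ P) := by
  have h1 : (1 : R) ∈ Submodule.colon Q P + Submodule.colon P Q := by
    rw [H P Q]; trivial
  rw [Submodule.add_eq_sup, Submodule.mem_sup] at h1
  obtain ⟨c, hc, d, hd, hcd⟩ := h1
  by_cases hcm : c ∈ m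
  · refine ⟨d, fun hdm => hm.ne_top (Ideal.eq_top_of_isUnit_mem m ?_ isUnit_one) , Or.inr ?_⟩
    · rw [← hcd]; exact m.add_mem hcm hdm
    · intro q hq
      simpa [smul_eq_mul] using Submodule.mem_colon.mp hd q hq
  · refine ⟨c, hcm, Or.inl ?_⟩
    intro p hp
    simpa [smul_eq_mul] using Submodule.mem_colon.mp hc p hp

/-- A finitely generated ideal is principal at m up to a unit outside m. -/
lemma mtl_loc_principal {R : Type*} [CommRing R]
    (H : ∀ I J : Ideal R, Submodule.colon J I + Submodule.colon I J = ⊤)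
    {m : Ideal R} (hm : m.IsMaximal) (s : Finset R) :
    ∃ u ∉ m, ∃ a ∈ Ideal.span (s : Set R), ∀ i ∈ Ideal.span (s : Set R),
      u * i ∈ Ideal.span {a} := by
  classical
  induction s using Finset.induction_on with
  | empty =>
      refine ⟨1, fun h => hm.ne_top (Ideal.eq_top_of_isUnit_mem m h isUnit_one),
        0, ?_, ?_⟩
      · simp
      · intro i hi
        simp only [Finset.coe_empty, Ideal.span_empty, Submodule.mem_bot] at hi
        simp [hi]
  | @insert b s hb ih =>
      obtain ⟨u1, hu1, a, ha, hua⟩ := ih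
      obtain ⟨v, hv, hcase⟩ := mtl_compare H hm (Ideal.span {a}) (Ideal.span {b})
      have hprime : m.IsPrime := hm.isPrime
      have hvu : v * u1 ∉ m := fun h => by
        rcases hprime.mem_or_mem h with h' | h' <;> [exact hv h'; exact hu1 h']
      rcases hcase with hc | hc
      · -- a-multiples go into (b); use b
        refine ⟨v * u1, hvu, b, Ideal.subset_span (by simp), ?_⟩
        have hle : Ideal.span (insert b ↑s) ≤
            Submodule.colon (Ideal.span {b}) (Ideal.span {v * u1}) := by
          rw [Ideal.span_le]
          intro g hg
          rw [SetLike.mem_coe, Ideal.mem_colon_span_singleton]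
          rcases Set.mem_insert_iff.mp hg with rfl | hgs
          · exact Ideal.mem_span_singleton.mpr ⟨v * u1, rfl⟩
          · have h1 : u1 * g ∈ Ideal.span {a} := hua g (Ideal.subset_span hgs)
            have h2 : v * (u1 * g) ∈ Ideal.span {b} := hc _ h1
            have : g * (v * u1) = v * (u1 * g) := by ring
            rw [this]; exact h2
        intro i hi
        have := Ideal.mem_colon_span_singleton.mp (hle (by simpa using hi))
        rwa [mul_comm]
      · -- b-multiples go into (a); keep a
        refine ⟨v * u1, hvu, a, ?_, ?_⟩
        · exact Ideal.span_mono (Finset.coe_subset.mpr (Finset.subset_insert b s)) ha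
        · have hle : Ideal.span (insert b ↑s) ≤
              Submodule.colon (Ideal.span {a}) (Ideal.span {v * u1}) := by
            rw [Ideal.span_le]
            intro g hg
            rw [SetLike.mem_coe, Ideal.mem_colon_span_singleton]
            rcases Set.mem_insert_iff.mp hg with rfl | hgs
            · have h2 : v * g ∈ Ideal.span {a} :=
                hc g (Ideal.mem_span_singleton_self g)
              have : g * (v * u1) = u1 * (v * g) := by ring
              rw [this]; exact Ideal.mul_mem_left _ _ h2
            · have h1 : u1 * g ∈ Ideal.span {a} := hua g (Ideal.subset_span hgs)
              have : g * (v * u1) = v * (u1 * g) := by ring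
              rw [this]; exact Ideal.mul_mem_left _ _ h1
          intro i hi
          have := Ideal.mem_colon_span_singleton.mp (hle (by simpa using hi))
          rwa [mul_comm]

/-- A Noetherian commutative ring `R` is an MTL-ring iff it is a BL-ring: prelinearity
`(I → J) + (J → I) = R` for all ideals holds iff both prelinearity and divisibility
`I ⊓ J = I·(I → J)` for all ideals hold. -/
theorem noetherian_mtl_iff_bl (R : Type*) [CommRing R] [IsNoetherianRing R] :
    (∀ I J : Ideal R, Submodule.colon J I + Submodule.colon I J = ⊤) ↔
      ((∀ I J : Ideal R, Submodule.colon J I + Submodule.colon I J = ⊤) ∧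
        (∀ I J : Ideal R, I ⊓ J = I * Submodule.colon J I)) := by
  constructor
  · intro H
    refine ⟨H, fun I J => ?_⟩
    apply le_antisymm
    · -- hard direction: I ⊓ J ≤ I * (J : I)
      intro x hx
      obtain ⟨hxI, hxJ⟩ := hx
      set K := I * Submodule.colon J I with hK
      set A := Submodule.colon K (Ideal.span {x}) with hA
      by_contra hxK
      have hAne : A ≠ ⊤ := by
        intro h
        apply hxK
        have h1 : (1 : R) ∈ A := by rw [h]; trivial
        have := Ideal.mem_colon_span_singleton.mp h1
        simpa using this
      obtain ⟨m, hm, hAm⟩ := Ideal.exists_le_maximal A hAne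
      obtain ⟨s, hs⟩ := (IsNoetherian.noetherian I : I.FG)
      rw [Ideal.submodule_span_eq] at hs
      obtain ⟨u, hu, a, ha, hua⟩ := mtl_loc_principal H hm s
      rw [hs] at ha hua
      have huxa : u * x ∈ Ideal.span {a} := hua x hxI
      obtain ⟨r, hr⟩ := Ideal.mem_span_singleton'.mp huxa
      -- u * r ∈ (J : I)
      have hur : u * r ∈ Submodule.colon J I := by
        rw [Submodule.mem_colon]
        intro i hi
        obtain ⟨c, hci⟩ := Ideal.mem_span_singleton'.mp (hua i hi)
        have heq : (u * r) • i = c * (r * a) := by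
          rw [smul_eq_mul]; linear_combination (-r) * hci
        rw [heq, hr]
        exact J.mul_mem_left c (J.mul_mem_left u hxJ)
      have huuK : u * u * x ∈ K := by
        have heq : u * u * x = a * (u * r) := by linear_combination (-u) * hr
        rw [heq]
        exact Ideal.mul_mem_mul ha hur
      have huuA : u * u ∈ A := Ideal.mem_colon_span_singleton.mpr huuK
      exact (hm.isPrime.mem_or_mem (hAm huuA)).elim hu hu
    · -- easy direction: I * (J : I) ≤ I ⊓ J
      rw [le_inf_iff]
      refine ⟨Ideal.mul_le.mpr fun a haI b _ => I.mul_mem_right b haI,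
        Ideal.mul_le.mpr fun a haI b hb => ?_⟩
      have := Submodule.mem_colon.mp hb a haI
      rw [smul_eq_mul] at this
      rwa [mul_comm]
  · exact fun h => h.1
end

section
/- Let R be a commutative valuation ring with identity (i.e., the ideals of R are totally ordered by set inclusion) that is not Noetherian. Then R is an MTL-ring but not a BL-ring: for all ideals I, J of R one has (I → J) + (J → I) = R, but there exist ideals I, J of R with I ∩ J ≠ I·(I → J). -/
/-- A non-Noetherian commutative valuation ring (a commutative ring whose ideals are
totally ordered by inclusion) is an MTL-ring but not a BL-ring: prelinearity
`(I → J) + (J → I) = R` holds for all ideals, but divisibility `I ⊓ J = I·(I → J)`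
fails for some ideals. -/
theorem nonNoetherian_valuation_mtl_not_bl (R : Type*) [CommRing R]
    (hchain : ∀ I J : Ideal R, I ≤ J ∨ J ≤ I)
    (hnoeth : ¬ IsNoetherianRing R) :
    (∀ I J : Ideal R, Submodule.colon J I + Submodule.colon I J = ⊤) ∧
      (∃ I J : Ideal R, I ⊓ J ≠ I * Submodule.colon J I) := by
  -- elements: principal ideals comparable, i.e. divisibility is total
  have hdvd : ∀ u v : R, u ∣ v ∨ v ∣ u := by
    intro u v
    rcases hchain (Ideal.span {u}) (Ideal.span {v}) with h | h
    · exact Or.inr (Ideal.mem_span_singleton.mp (h (Ideal.mem_span_singleton_self u)))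
    · exact Or.inl (Ideal.mem_span_singleton.mp (h (Ideal.mem_span_singleton_self v)))
  -- local: if u is not a unit then 1 - u is a unit
  have hloc : ∀ u : R, ¬ IsUnit u → IsUnit (1 - u) := by
    intro u hu
    rcases hdvd u (1 - u) with ⟨d, hd⟩ | ⟨d, hd⟩
    · exact absurd (IsUnit.of_mul_eq_one (a := u) (1 + d) (by linear_combination -hd)) hu
    · exact IsUnit.of_mul_eq_one (a := 1 - u) (1 + d) (by linear_combination -hd)
  constructor
  · intro I J
    rcases hchain I J with h | h
    · have ht : Submodule.colon J I = ⊤ := by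
        rw [eq_top_iff]
        intro r _
        rw [Submodule.mem_colon]
        intro p hp
        exact h (I.smul_mem r hp)
      rw [ht, Submodule.add_eq_sup, top_sup_eq]
    · have ht : Submodule.colon I J = ⊤ := by
        rw [eq_top_iff]
        intro r _
        rw [Submodule.mem_colon]
        intro p hp
        exact h (J.smul_mem r hp)
      rw [ht, Submodule.add_eq_sup, sup_top_eq]
  · obtain ⟨I, hI⟩ : ∃ I : Ideal R, ¬ I.FG := by
      by_contra h
      push_neg at h
      exact hnoeth (isNoetherianRing_iff_ideal_fg R |>.mpr h)
    obtain ⟨b, hbI, hb0⟩ : ∃ b ∈ I, b ≠ 0 := by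
      by_contra h
      push_neg at h
      apply hI
      have : I = ⊥ := by
        rw [eq_bot_iff]; intro x hx; exact (Submodule.mem_bot R).mpr (h x hx)
      rw [this]; exact Submodule.fg_bot
    refine ⟨I, Ideal.span {b}, fun heq => ?_⟩
    have hbmem : b ∈ I * Submodule.colon (Ideal.span {b}) I := by
      rw [← heq]
      exact ⟨hbI, Ideal.mem_span_singleton_self b⟩
    -- reduce to a single product dividing b
    have hsingle : ∃ x ∈ I, ∃ y ∈ Submodule.colon (Ideal.span {b}) I, x * y ∣ b := by
      refine Submodule.mul_induction_on
        (C := fun z => ∃ x ∈ I, ∃ y ∈ Submodule.colon (Ideal.span {b}) I, x * y ∣ z)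
        hbmem ?_ ?_
      · intro m hm n hn
        exact ⟨m, hm, n, hn, dvd_refl _⟩
      · rintro z₁ z₂ ⟨x₁, hx₁, y₁, hy₁, hd₁⟩ ⟨x₂, hx₂, y₂, hy₂, hd₂⟩
        rcases hdvd (x₁ * y₁) (x₂ * y₂) with h | h
        · exact ⟨x₁, hx₁, y₁, hy₁, dvd_add hd₁ (h.trans hd₂)⟩
        · exact ⟨x₂, hx₂, y₂, hy₂, dvd_add (h.trans hd₁) hd₂⟩
    obtain ⟨x, hx, y, hy, r, hr⟩ := hsingle
    -- I is not principal: find t ∈ I not in span {x}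
    obtain ⟨t, htI, htx⟩ : ∃ t ∈ I, t ∉ Ideal.span {x} := by
      by_contra h
      push_neg at h
      exact hI ⟨{x}, by
        rw [Finset.coe_singleton]
        exact le_antisymm (Ideal.span_le.mpr (Set.singleton_subset_iff.mpr hx)) h⟩
    have htx' : t ∣ x := by
      rcases hdvd t x with h | h
      · exact h
      · exact absurd (Ideal.mem_span_singleton.mpr h) htx
    obtain ⟨c, hc⟩ := htx'
    -- y * t ∈ (b)
    have hyt : b ∣ y * t := by
      have := Submodule.mem_colon.mp hy t htI
      rw [smul_eq_mul] at this
      exact Ideal.mem_span_singleton.mp this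
    obtain ⟨s, hs⟩ := hyt
    -- b = b * (s * c * r)
    have key : b * (1 - s * c * r) = 0 := by
      have : b = x * y * r := hr
      rw [hc] at this
      linear_combination this + c * r * hs
    by_cases hcu : IsUnit (s * c * r)
    · have hc' : IsUnit c := isUnit_of_dvd_unit ⟨s * r, by ring⟩ hcu
      obtain ⟨u, hu⟩ := hc'
      apply htx
      rw [Ideal.mem_span_singleton]
      exact ⟨↑u⁻¹, by rw [hc, ← hu]; simp [mul_assoc]⟩
    · have h1 : IsUnit (1 - s * c * r) := hloc _ hcu
      obtain ⟨v, hv⟩ := h1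
      apply hb0
      calc b = b * (1 - s * c * r) * ↑v⁻¹ := by rw [← hv]; simp [mul_assoc]
        _ = 0 := by rw [key, zero_mul]
end
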